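/- Regularity (non-vanishing current) lemma: let b ∈ (0, π/2) and E* < 4 − √8. There exists C = C(b, E*) > 0 such that for every ℓ²-normalized eigenfunction ψ of H_{Λ_L}(A) with eigenvalue E ∈ [0, E*], and every vector potential A whose flux through every plaquette of Λ_L lies in T_b, one has Σ_{a ∈ 𝒜_{Λ_L}} |J_ψ(a)|² ≥ C L^{−4}. -/

import Mathlib

open scoped Classical

/-- `x` and `y` are nearest neighbors in `ℤ²` (`|x - y| = 1`). -/
def edge (x y : ℤ × ℤ) : Prop := (x.1 - y.1) ^ 2 + (x.2 - y.2) ^ 2 = 1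

/-- The four nearest neighbors of a point of `ℤ²`. -/
def nbrs (x : ℤ × ℤ) : Finset (ℤ × ℤ) :=
  {x + (1, 0), x - (1, 0), x + (0, 1), x - (0, 1)}

/-- The finite-volume magnetic Schrödinger operator with simple boundary conditions:
`(H_Λ(A) ψ)(x) = 4 ψ(x) - Σ_{y ∈ Λ, |x-y|=1} e^{iA(x,y)} ψ(y)`. -/
noncomputable def Ham (Λ : Finset (ℤ × ℤ)) (A : ℤ × ℤ → ℤ × ℤ → ℝ)
    (ψ : ℤ × ℤ → ℂ) (x : ℤ × ℤ) : ℂ :=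
  4 * ψ x - ∑ y ∈ Λ.filter (fun y => edge x y), Complex.exp (Complex.I * (A x y)) * ψ y

/-- The current of a wavefunction `ψ` along the directed edge `(x,y)`:
`J_ψ(x,y) = -2 Re( conj(ψ x) · i e^{iA(x,y)} ψ y )`. -/
noncomputable def cur (A : ℤ × ℤ → ℤ × ℤ → ℝ) (ψ : ℤ × ℤ → ℂ) (x y : ℤ × ℤ) : ℝ :=
  -2 * ((starRingEnd ℂ) (ψ x) * Complex.I * Complex.exp (Complex.I * (A x y)) * ψ y).re

/-- The box `Λ_L = {x ∈ ℤ² : max(|x₁|, |x₂|) ≤ L}`. -/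
noncomputable def box (L : ℕ) : Finset (ℤ × ℤ) := Finset.Icc (-(L : ℤ), -(L : ℤ)) ((L : ℤ), (L : ℤ))

/-- The unit square (plaquette) with lower left corner `p`. -/
def squareF (p : ℤ × ℤ) : Finset (ℤ × ℤ) := {p, p + (1, 0), p + (0, 1), p + (1, 1)}

/-- The flux of the vector potential `A` through the plaquette with lower left corner
`p`: the sum of `A` over the four directed boundary edges. -/
def flux (A : ℤ × ℤ → ℤ × ℤ → ℝ) (p : ℤ × ℤ) : ℝ :=
  A p (p + (1, 0)) + A (p + (1, 0)) (p + (1, 1))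
    + A (p + (1, 1)) (p + (0, 1)) + A (p + (0, 1)) p

/-- `Tb b` : the set of angles (represented by real numbers, modulo `2π`) whose distance
to both `0` and `π` on the circle `ℝ/2πℤ` is at least `b`. -/
def Tb (b : ℝ) : Set ℝ := {θ : ℝ | ∀ n : ℤ, b ≤ |θ - n * Real.pi|}


/-!
Let `m = ‖ψ x₀‖` be the maximum of `|ψ|` and `δ = 4 - E > √8`. Taking norms in the eigenvalue
equation makes `|ψ|` satisfy `δ |ψ x| ≤ Σ_{y ~ x} |ψ y|`. At `x₀` this leaves at most one
neighbour below `ε m`. If no plaquette had all its corners `≥ ε m`, every diagonal point next to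
two large neighbours of `x₀` would be small; the inequality at the large neighbours then gives
`δ |ψ y| < (2 + 2ε) m`, which contradicts the inequality at `x₀` (summed over all four neighbours
when none is small, using `δ² > 8`). So some plaquette has `|ψ| ≥ ε m` at all four corners.

Along its boundary the bond amplitudes `z = conj (ψ x) e^{iA(x,y)} ψ y` multiply to a positive
number times `e^{i·flux}`, so `|Im ∏ z| ≥ sin b · ‖∏ z‖`. Since
`|Im (z w)| ≤ |Im z| ‖w‖ + ‖z‖ |Im w|`, some bond has `|Im z| ≥ (sin b / 8) ‖z‖`, which is at
least `(sin b / 8) ε² m²`, and its current is `2 Im z`. Normalisation gives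
`m² ≥ 1 / |Λ_L| ≥ 1 / (9 L²)`.
-/

open Real

def unitSteps : Finset (ℤ × ℤ) := {(1, 0), (-1, 0), (0, 1), (0, -1)}

def quarterTurn (v : ℤ × ℤ) : ℤ × ℤ := (-v.2, v.1)

lemma quarterTurn_neg (v : ℤ × ℤ) : quarterTurn (-v) = -quarterTurn v := rfl

lemma quarterTurn_quarterTurn (v : ℤ × ℤ) : quarterTurn (quarterTurn v) = -v := rfl

lemma quarterTurn_mem_unitSteps {d : ℤ × ℤ} (hd : d ∈ unitSteps) : quarterTurn d ∈ unitSteps := by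
  simp only [unitSteps, Finset.mem_insert, Finset.mem_singleton] at hd
  rcases hd with rfl | rfl | rfl | rfl <;> decide

lemma neg_mem_unitSteps {d : ℤ × ℤ} (hd : d ∈ unitSteps) : -d ∈ unitSteps := by
  simp only [unitSteps, Finset.mem_insert, Finset.mem_singleton] at hd
  rcases hd with rfl | rfl | rfl | rfl <;> decide

lemma sum_unitSteps_eq {M : Type*} [AddCommMonoid M] {d : ℤ × ℤ} (hd : d ∈ unitSteps)
    (f : ℤ × ℤ → M) :
    ∑ v ∈ unitSteps, f v = f d + f (-d) + f (quarterTurn d) + f (-quarterTurn d) := by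
  simp only [unitSteps, Finset.mem_insert, Finset.mem_singleton] at hd
  rcases hd with rfl | rfl | rfl | rfl <;> simp [unitSteps, quarterTurn] <;> abel

lemma sub_mem_unitSteps_of_edge {x y : ℤ × ℤ} (h : edge x y) : y - x ∈ unitSteps := by
  obtain ⟨x₁, x₂⟩ := x
  obtain ⟨y₁, y₂⟩ := y
  replace h : (y₁ - x₁) ^ 2 + (y₂ - x₂) ^ 2 = 1 := by rw [← h]; ring
  simp only [unitSteps, Prod.mk_sub_mk, Finset.mem_insert, Finset.mem_singleton, Prod.mk.injEq]
  generalize y₁ - x₁ = a at *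
  generalize y₂ - x₂ = c at *
  obtain ⟨ha₀, ha₁⟩ : -1 ≤ a ∧ a ≤ 1 := by constructor <;> nlinarith
  obtain ⟨hc₀, hc₁⟩ : -1 ≤ c ∧ c ≤ 1 := by constructor <;> nlinarith
  interval_cases a <;> interval_cases c <;> simp_all

lemma nbrs_eq_map (x : ℤ × ℤ) : nbrs x = unitSteps.map (addLeftEmbedding x) := by
  simp [nbrs, unitSteps, sub_eq_add_neg]

lemma mem_nbrs_of_edge {x y : ℤ × ℤ} (h : edge x y) : y ∈ nbrs x := by
  rw [nbrs_eq_map]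
  exact Finset.mem_map.2 ⟨y - x, sub_mem_unitSteps_of_edge h, add_sub_cancel x y⟩

lemma sum_nbrs_eq_sum_unitSteps {M : Type*} [AddCommMonoid M] (f : ℤ × ℤ → M) (x : ℤ × ℤ) :
    ∑ y ∈ nbrs x, f y = ∑ d ∈ unitSteps, f (x + d) := by
  rw [nbrs_eq_map, Finset.sum_map]
  rfl

lemma exists_squareF_subset {d : ℤ × ℤ} (hd : d ∈ unitSteps) (x : ℤ × ℤ) :
    ∃ p, squareF p ⊆ {x, x + d, x + quarterTurn d, x + d + quarterTurn d} := by
  simp only [unitSteps, Finset.mem_insert, Finset.mem_singleton] at hd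
  rcases hd with rfl | rfl | rfl | rfl <;>
    [use x; use x + (-1, -1); use x + (-1, 0); use x + (0, -1)] <;>
  · intro q
    simp only [squareF, quarterTurn, Finset.mem_insert, Finset.mem_singleton]
    rintro (rfl | rfl | rfl | rfl) <;> simp [Prod.ext_iff]

lemma card_box (L : ℕ) : (box L).card = (2 * L + 1) ^ 2 := by
  rw [box, Finset.card_Icc_prod, Int.card_Icc, sq]
  congr 1 <;> omega

section WellSupportedPlaquette

variable {F : ℤ × ℤ → ℝ} {c δ ε m : ℝ}

lemma lt_of_forall_exists_mem_squareF_lt (hno : ∀ p, ∃ q ∈ squareF p, F q < c) {d : ℤ × ℤ}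
    (hd : d ∈ unitSteps) {x : ℤ × ℤ} (h₀ : c ≤ F x) (h₁ : c ≤ F (x + d))
    (h₂ : c ≤ F (x + quarterTurn d)) : F (x + d + quarterTurn d) < c := by
  obtain ⟨p, hp⟩ := exists_squareF_subset hd x
  obtain ⟨q, hq, hlt⟩ := hno p
  have := hp hq
  simp only [Finset.mem_insert, Finset.mem_singleton] at this
  rcases this with rfl | rfl | rfl | rfl <;> linarith

lemma mul_lt_of_forall_exists_mem_squareF_lt (hF : ∀ x, F x ≤ m)
    (hsub : ∀ x, δ * F x ≤ ∑ y ∈ nbrs x, F y) (hno : ∀ p, ∃ q ∈ squareF p, F q < c)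
    {d : ℤ × ℤ} (hd : d ∈ unitSteps) {x : ℤ × ℤ} (h₀ : c ≤ F x) (h₁ : c ≤ F (x + d))
    (h₂ : c ≤ F (x + quarterTurn d)) (h₃ : c ≤ F (x + -quarterTurn d)) :
    δ * F (x + d) < 2 * m + 2 * c := by
  have diag₁ := lt_of_forall_exists_mem_squareF_lt hno hd h₀ h₁ h₂
  have diag₂ := lt_of_forall_exists_mem_squareF_lt hno
    (neg_mem_unitSteps (quarterTurn_mem_unitSteps hd)) h₀ h₃
    (by rwa [quarterTurn_neg, quarterTurn_quarterTurn, neg_neg])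
  rw [quarterTurn_neg, quarterTurn_quarterTurn, neg_neg,
    show x + -quarterTurn d + d = x + d + -quarterTurn d by abel] at diag₂
  have hx := hsub (x + d)
  rw [sum_nbrs_eq_sum_unitSteps, sum_unitSteps_eq hd, add_neg_cancel_right] at hx
  linarith [hF (x + d + d), hF x]

lemma exists_forall_mem_squareF_le (hF : ∀ x, F x ≤ m)
    (hsub : ∀ x, δ * F x ≤ ∑ y ∈ nbrs x, F y) {x₀ : ℤ × ℤ} (hx₀ : F x₀ = m) (hm : 0 < m)
    (hδ : 0 < δ) (hε : 0 < ε) (hε' : ε ≤ 1 / 100) (hδε : 8 + 8 * ε ≤ δ ^ 2) :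
    ∃ p, ∀ q ∈ squareF p, ε * m ≤ F q := by
  by_contra! hno
  have hx₀ε : ε * m ≤ F x₀ := by rw [hx₀]; nlinarith
  have hδm : 14 / 5 * m ≤ δ * m := by nlinarith
  have hεm : ε * m ≤ m / 100 := by nlinarith
  have hsum := hsub x₀
  rw [sum_nbrs_eq_sum_unitSteps, hx₀] at hsum
  by_cases hall : ∀ d ∈ unitSteps, ε * m ≤ F (x₀ + d)
  · have hlt : ∑ d ∈ unitSteps, δ * F (x₀ + d) < ∑ _d ∈ unitSteps, (2 * m + 2 * (ε * m)) :=
      Finset.sum_lt_sum_of_nonempty ⟨(1, 0), by decide⟩ fun d hd =>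
        mul_lt_of_forall_exists_mem_squareF_lt hF hsub hno hd hx₀ε (hall d hd)
          (hall _ (quarterTurn_mem_unitSteps hd))
          (hall _ (neg_mem_unitSteps (quarterTurn_mem_unitSteps hd)))
    rw [← Finset.mul_sum, Finset.sum_const, show unitSteps.card = 4 by decide, nsmul_eq_mul,
      Nat.cast_ofNat] at hlt
    nlinarith [mul_le_mul_of_nonneg_left hsum hδ.le, mul_le_mul_of_nonneg_right hδε hm.le]
  · push Not at hall
    obtain ⟨s, hs, hsmall⟩ := hall
    rw [sum_unitSteps_eq hs] at hsum
    have h₁ : ε * m ≤ F (x₀ + -s) := by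
      by_contra! h; linarith [hF (x₀ + quarterTurn s), hF (x₀ + -quarterTurn s)]
    have h₂ : ε * m ≤ F (x₀ + quarterTurn s) := by
      by_contra! h; linarith [hF (x₀ + -s), hF (x₀ + -quarterTurn s)]
    have h₃ : ε * m ≤ F (x₀ + -quarterTurn s) := by
      by_contra! h; linarith [hF (x₀ + -s), hF (x₀ + quarterTurn s)]
    have hlt := mul_lt_of_forall_exists_mem_squareF_lt hF hsub hno (neg_mem_unitSteps hs) hx₀ε h₁
      (by rwa [quarterTurn_neg]) (by rwa [quarterTurn_neg, neg_neg])
    have hlow : (δ - 2 - ε) * m < F (x₀ + -s) := by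
      linarith [hF (x₀ + quarterTurn s), hF (x₀ + -quarterTurn s)]
    have hpos : 0 < δ ^ 2 - 2 * δ - ε * δ - 2 - 2 * ε := by nlinarith
    nlinarith [mul_lt_mul_of_pos_left hlow hδ, mul_pos hpos hm]

end WellSupportedPlaquette

lemma sub_mul_norm_le_sum_nbrs {Λ : Finset (ℤ × ℤ)} {A : ℤ × ℤ → ℤ × ℤ → ℝ} {ψ : ℤ × ℤ → ℂ}
    {E : ℝ} (hE : E ≤ 4) (hout : ∀ x ∉ Λ, ψ x = 0) (heig : ∀ x ∈ Λ, Ham Λ A ψ x = E * ψ x)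
    (x : ℤ × ℤ) : (4 - E) * ‖ψ x‖ ≤ ∑ y ∈ nbrs x, ‖ψ y‖ := by
  by_cases hx : x ∉ Λ
  · simpa [hout x hx] using Finset.sum_nonneg fun y _ => norm_nonneg (ψ y)
  have hS : ∑ y ∈ Λ.filter (edge x ·), Complex.exp (Complex.I * A x y) * ψ y
      = ((4 - E : ℝ) : ℂ) * ψ x := by
    have h := heig x (not_not.1 hx)
    rw [Ham] at h
    push_cast
    linear_combination -h
  calc (4 - E) * ‖ψ x‖
      = ‖∑ y ∈ Λ.filter (edge x ·), Complex.exp (Complex.I * A x y) * ψ y‖ := by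
        rw [hS, norm_mul, Complex.norm_real, Real.norm_of_nonneg (by linarith)]
    _ ≤ ∑ y ∈ Λ.filter (edge x ·), ‖ψ y‖ := by
        refine (norm_sum_le _ _).trans_eq (Finset.sum_congr rfl fun y _ => ?_)
        rw [norm_mul, mul_comm Complex.I, Complex.norm_exp_ofReal_mul_I, one_mul]
    _ ≤ ∑ y ∈ nbrs x, ‖ψ y‖ :=
        Finset.sum_le_sum_of_subset_of_nonneg
          (fun y hy => mem_nbrs_of_edge (Finset.mem_filter.1 hy).2) fun _ _ _ => norm_nonneg _

lemma mem_of_le_norm {Λ : Finset (ℤ × ℤ)} {ψ : ℤ × ℤ → ℂ} (hout : ∀ x ∉ Λ, ψ x = 0) {c : ℝ}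
    (hc : 0 < c) {x : ℤ × ℤ} (hx : c ≤ ‖ψ x‖) : x ∈ Λ := by
  by_contra h
  rw [hout x h, norm_zero] at hx
  linarith

lemma sq_cur_le_sum {Λ : Finset (ℤ × ℤ)} {A : ℤ × ℤ → ℤ × ℤ → ℝ} {ψ : ℤ × ℤ → ℂ}
    {x y : ℤ × ℤ} (hx : x ∈ Λ) (hy : y ∈ Λ) (hxy : edge x y) :
    cur A ψ x y ^ 2 ≤ ∑ x ∈ Λ, ∑ y ∈ Λ.filter (edge x ·), cur A ψ x y ^ 2 :=
  calc cur A ψ x y ^ 2 ≤ ∑ y ∈ Λ.filter (edge x ·), cur A ψ x y ^ 2 :=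
        Finset.single_le_sum (fun _ _ => sq_nonneg _) (Finset.mem_filter.2 ⟨hy, hxy⟩)
    _ ≤ _ := Finset.single_le_sum (f := fun x => ∑ y ∈ Λ.filter (edge x ·), cur A ψ x y ^ 2)
        (fun _ _ => Finset.sum_nonneg fun _ _ => sq_nonneg _) hx

lemma zpow_neg_four_div_le_pow_four {L : ℕ} (hL : 1 ≤ L) {ψ : ℤ × ℤ → ℂ}
    (hψ : ∑ x ∈ box L, ‖ψ x‖ ^ 2 = 1) {m : ℝ} (hm : ∀ x, ‖ψ x‖ ≤ m) :
    (L : ℝ) ^ (-4 : ℤ) / 81 ≤ m ^ 4 := by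
  have hL' : (1 : ℝ) ≤ L := by exact_mod_cast hL
  have h9 : 1 ≤ 9 * (L : ℝ) ^ 2 * m ^ 2 := calc
    1 = ∑ x ∈ box L, ‖ψ x‖ ^ 2 := hψ.symm
    _ ≤ ∑ _x ∈ box L, m ^ 2 := Finset.sum_le_sum fun x _ => by gcongr; exact hm x
    _ = (2 * L + 1) ^ 2 * m ^ 2 := by rw [Finset.sum_const, card_box, nsmul_eq_mul]; push_cast; rfl
    _ ≤ 9 * (L : ℝ) ^ 2 * m ^ 2 := by gcongr; nlinarith
  rw [zpow_neg, zpow_ofNat, div_le_iff₀ (by norm_num), inv_le_iff_one_le_mul₀ (by positivity)]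
  nlinarith

lemma sin_le_abs_sin_of_mem_Tb {b Φ : ℝ} (hb₀ : -(π / 2) ≤ b) (hb : b ≤ π / 2) (hΦ : Φ ∈ Tb b) :
    sin b ≤ |sin Φ| := by
  set n := round (Φ / π)
  have hn : |Φ - n * π| ≤ π / 2 := calc
    |Φ - n * π| = |Φ / π - n| * π := by
      rw [← abs_of_pos pi_pos, ← abs_mul, abs_of_pos pi_pos, sub_mul, div_mul_cancel₀ _ pi_ne_zero]
    _ ≤ 1 / 2 * π := by gcongr; exact abs_sub_round _
    _ = π / 2 := by ring
  calc sin b ≤ sin |Φ - n * π| := sin_le_sin_of_le_of_le_pi_div_two hb₀ hn (hΦ n)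
    _ = |sin Φ| := by
      rw [← abs_sin_eq_sin_abs_of_abs_le_pi (by linarith [pi_pos]), sin_sub_int_mul_pi, abs_mul,
        abs_neg_one_zpow, one_mul]

lemma abs_im_prod_le {ι : Type*} (s : Finset ι) (z : ι → ℂ) {t : ℝ}
    (h : ∀ i ∈ s, |(z i).im| ≤ t * ‖z i‖) :
    |(∏ i ∈ s, z i).im| ≤ s.card * t * ‖∏ i ∈ s, z i‖ := by
  induction s using Finset.induction_on with
  | empty => simp
  | insert a s ha ih =>
    rw [Finset.prod_insert ha, Finset.card_insert_of_notMem ha, norm_mul, Complex.mul_im]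
    have ha' := h a (Finset.mem_insert_self a s)
    have ih' := ih fun i hi => h i (Finset.mem_insert_of_mem hi)
    set P := ∏ i ∈ s, z i
    calc |(z a).re * P.im + (z a).im * P.re| ≤ ‖z a‖ * |P.im| + |(z a).im| * ‖P‖ := by
          refine (abs_add_le _ _).trans ?_
          rw [abs_mul, abs_mul]
          gcongr
          exacts [Complex.abs_re_le_norm _, Complex.abs_re_le_norm _]
      _ ≤ ‖z a‖ * (s.card * t * ‖P‖) + t * ‖z a‖ * ‖P‖ := by gcongr
      _ = ((s.card + 1 : ℕ) : ℝ) * t * (‖z a‖ * ‖P‖) := by push_cast; ring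

noncomputable def bond (A : ℤ × ℤ → ℤ × ℤ → ℝ) (ψ : ℤ × ℤ → ℂ) (x y : ℤ × ℤ) : ℂ :=
  starRingEnd ℂ (ψ x) * Complex.exp (A x y * Complex.I) * ψ y

def plaquetteCorner (p : ℤ × ℤ) : Fin 4 → ℤ × ℤ := ![p, p + (1, 0), p + (1, 1), p + (0, 1)]

lemma flux_eq_sum (A : ℤ × ℤ → ℤ × ℤ → ℝ) (p : ℤ × ℤ) :
    flux A p = ∑ k, A (plaquetteCorner p k) (plaquetteCorner p (k + 1)) := by
  simp [flux, plaquetteCorner, Fin.sum_univ_four]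

lemma plaquetteCorner_mem (p : ℤ × ℤ) (k : Fin 4) : plaquetteCorner p k ∈ squareF p := by
  fin_cases k <;> simp [plaquetteCorner, squareF]

lemma edge_plaquetteCorner (p : ℤ × ℤ) (k : Fin 4) :
    edge (plaquetteCorner p k) (plaquetteCorner p (k + 1)) := by
  fin_cases k <;> simp [plaquetteCorner, edge]

section Current

variable {A : ℤ × ℤ → ℤ × ℤ → ℝ} {ψ : ℤ × ℤ → ℂ}

lemma cur_eq_two_mul_im_bond (x y : ℤ × ℤ) : cur A ψ x y = 2 * (bond A ψ x y).im := by
  rw [cur, bond, mul_comm Complex.I (A x y : ℂ), mul_right_comm _ Complex.I,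
    mul_right_comm _ Complex.I, Complex.mul_I_re]
  ring

lemma norm_bond (x y : ℤ × ℤ) : ‖bond A ψ x y‖ = ‖ψ x‖ * ‖ψ y‖ := by
  rw [bond, norm_mul, norm_mul, Complex.norm_conj, Complex.norm_exp_ofReal_mul_I, mul_one]

lemma prod_bond_cycle {n : ℕ} [NeZero n] (v : Fin n → ℤ × ℤ) :
    ∏ k, bond A ψ (v k) (v (k + 1)) = ((∏ k, ‖ψ (v k)‖ ^ 2 : ℝ) : ℂ)
      * Complex.exp ((∑ k, A (v k) (v (k + 1)) : ℝ) * Complex.I) := by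
  have hshift : ∏ k, ψ (v (k + 1)) = ∏ k, ψ (v k) :=
    Fintype.prod_equiv (Equiv.addRight 1) _ _ fun _ => rfl
  simp only [bond, Finset.prod_mul_distrib, hshift, Complex.ofReal_sum, Finset.sum_mul,
    Complex.exp_sum, Complex.ofReal_prod, Complex.ofReal_pow, ← Complex.conj_mul']
  ring

lemma sq_le_cur_sq {x y : ℤ × ℤ} {s c : ℝ} (hs : 0 ≤ s) (hc : 0 ≤ c) (hx : c ≤ ‖ψ x‖)
    (hy : c ≤ ‖ψ y‖) (h : s * ‖bond A ψ x y‖ ≤ |(bond A ψ x y).im|) :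
    (2 * s * c ^ 2) ^ 2 ≤ cur A ψ x y ^ 2 := by
  have hc2 : c ^ 2 ≤ ‖bond A ψ x y‖ := by
    rw [norm_bond, sq]
    exact mul_le_mul hx hy hc (hc.trans hx)
  rw [cur_eq_two_mul_im_bond, sq_le_sq, mul_assoc, abs_mul 2, abs_mul 2, abs_two,
    abs_of_nonneg (by positivity : 0 ≤ s * c ^ 2)]
  gcongr
  exact (mul_le_mul_of_nonneg_left hc2 hs).trans h

lemma exists_edge_sq_le_cur_sq {p : ℤ × ℤ} {b c : ℝ} (hb₀ : 0 < b) (hb : b ≤ π / 2)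
    (hΦ : flux A p ∈ Tb b) (hc : 0 < c) (hψ : ∀ q ∈ squareF p, c ≤ ‖ψ q‖) :
    ∃ x ∈ squareF p, ∃ y ∈ squareF p, edge x y ∧ (sin b * c ^ 2 / 4) ^ 2 ≤ cur A ψ x y ^ 2 := by
  set v := plaquetteCorner p
  have hv (k : Fin 4) : c ≤ ‖ψ (v k)‖ := hψ _ (plaquetteCorner_mem p k)
  have hsin : 0 < sin b := sin_pos_of_pos_of_lt_pi hb₀ (by linarith [pi_pos])
  obtain ⟨k, hk⟩ : ∃ k, sin b / 8 * ‖bond A ψ (v k) (v (k + 1))‖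
      ≤ |(bond A ψ (v k) (v (k + 1))).im| := by
    by_contra! hsmall
    have hupper := abs_im_prod_le Finset.univ (fun k => bond A ψ (v k) (v (k + 1)))
      fun k _ => (hsmall k).le
    have hR : 0 < ∏ k, ‖ψ (v k)‖ ^ 2 :=
      Finset.prod_pos fun k _ => pow_pos (hc.trans_le (hv k)) 2
    have hsinΦ := sin_le_abs_sin_of_mem_Tb (by linarith) hb hΦ
    rw [prod_bond_cycle, ← flux_eq_sum, Complex.im_ofReal_mul, Complex.exp_ofReal_mul_I_im,
      norm_mul, Complex.norm_exp_ofReal_mul_I, mul_one, Complex.norm_of_nonneg hR.le, abs_mul,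
      abs_of_pos hR, Finset.card_univ, Fintype.card_fin] at hupper
    nlinarith [mul_le_mul_of_nonneg_left hsinΦ hR.le, mul_pos hR hsin]
  refine ⟨v k, plaquetteCorner_mem p k, v (k + 1), plaquetteCorner_mem p _,
    edge_plaquetteCorner p k, ?_⟩
  convert sq_le_cur_sq (by positivity) hc.le (hv k) (hv (k + 1)) hk using 2
  ring

end Current

/-- regularity (non-vanishing current) lemma.  For `b ∈ (0, π/2)` and
`E* < 4 - √8` there is `C = C(b,E*) > 0` such that for every `ℓ²`-normalized
eigenfunction `ψ` of `H_{Λ_L}(A)` with eigenvalue `E ∈ [0, E*]`, and every vector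
potential whose flux through every plaquette of `Λ_L` lies in `T_b`,
`Σ_{a ∈ 𝒜_{Λ_L}} |J_ψ(a)|² ≥ C L⁻⁴`. -/
theorem stmt13 (b Estar : ℝ) (hb : b ∈ Set.Ioo 0 (Real.pi / 2))
    (hEstar : Estar < 4 - Real.sqrt 8) :
    ∃ C > 0, ∀ (L : ℕ), 1 ≤ L → ∀ (A : ℤ × ℤ → ℤ × ℤ → ℝ) (ψ : ℤ × ℤ → ℂ) (E : ℝ),
      (∀ x y, edge x y → A x y = -A y x) →
      (∀ p : ℤ × ℤ, squareF p ⊆ box L → flux A p ∈ Tb b) →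
      (∀ x ∉ box L, ψ x = 0) →
      (∀ x ∈ box L, Ham (box L) A ψ x = (E : ℂ) * ψ x) →
      0 ≤ E → E ≤ Estar →
      (∑ x ∈ box L, ‖ψ x‖ ^ 2 = 1) →
      C * (L : ℝ) ^ (-4 : ℤ)
        ≤ ∑ x ∈ box L, ∑ y ∈ (box L).filter (fun y => edge x y), (cur A ψ x y) ^ 2 := by
  obtain ⟨hb₀, hb⟩ := hb
  have hδ₀ : 0 < 4 - Estar := by linarith [sqrt_nonneg 8]
  have hδ₀8 : 8 < (4 - Estar) ^ 2 := (sqrt_lt' hδ₀).1 (by linarith)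
  obtain ⟨ε, hε, hε', hεδ⟩ : ∃ ε > 0, ε ≤ 1 / 100 ∧ 8 + 8 * ε ≤ (4 - Estar) ^ 2 :=
    ⟨min (1 / 100) (((4 - Estar) ^ 2 - 8) / 8), lt_min (by norm_num) (by linarith),
      min_le_left _ _, by linarith [min_le_right (1 / 100 : ℝ) (((4 - Estar) ^ 2 - 8) / 8)]⟩
  have hsin : 0 < sin b := sin_pos_of_pos_of_lt_pi hb₀ (by linarith [pi_pos])
  refine ⟨(sin b * ε ^ 2 / 4) ^ 2 / 81, by positivity, ?_⟩
  intro L hL A ψ E _ hflux hout heig _ hE hnorm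
  obtain ⟨x₀, -, hmax⟩ := (box L).exists_max_image (‖ψ ·‖) ⟨0, by simp [box, Prod.le_def]⟩
  have hψ : ∀ x, ‖ψ x‖ ≤ ‖ψ x₀‖ := fun x => by
    by_cases hx : x ∈ box L
    exacts [hmax x hx, by simp [hout x hx]]
  have hL4 := zpow_neg_four_div_le_pow_four hL hnorm hψ
  have hm : 0 < ‖ψ x₀‖ := lt_of_pow_lt_pow_left₀ 4 (norm_nonneg _)
    (by simpa using (by positivity : (0 : ℝ) < _).trans_le hL4)
  obtain ⟨p, hp⟩ := exists_forall_mem_squareF_le hψ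
    (sub_mul_norm_le_sum_nbrs (by linarith [sqrt_nonneg 8]) hout heig) rfl hm (by linarith) hε hε'
    (hεδ.trans (pow_le_pow_left₀ hδ₀.le (by linarith) 2))
  have hpbox : squareF p ⊆ box L := fun q hq => mem_of_le_norm hout (by positivity) (hp q hq)
  obtain ⟨x, hx, y, hy, hxy, hcur⟩ :=
    exists_edge_sq_le_cur_sq hb₀ hb.le (hflux p hpbox) (by positivity) hp
  calc (sin b * ε ^ 2 / 4) ^ 2 / 81 * (L : ℝ) ^ (-4 : ℤ)
      = (sin b * ε ^ 2 / 4) ^ 2 * ((L : ℝ) ^ (-4 : ℤ) / 81) := by ring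
    _ ≤ (sin b * ε ^ 2 / 4) ^ 2 * ‖ψ x₀‖ ^ 4 := by gcongr
    _ = (sin b * (ε * ‖ψ x₀‖) ^ 2 / 4) ^ 2 := by ring
    _ ≤ cur A ψ x y ^ 2 := hcur
    _ ≤ _ := sq_cur_le_sum (hpbox hx) (hpbox hy) hxy
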